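/- For every α ∈ Λ²₁₄ one has α ∧ α ∧ φ₀ = −|α|²·vol₇, where |α|² is the sum of the squares of the coefficients of α in the standard basis of 2-forms e*_i ∧ e*_j (i < j) dual to the coordinate basis of ℝ⁷. In particular α ∧ α ∧ φ₀ is a negative multiple of vol₇ for every nonzero α ∈ Λ²₁₄. -/

import Mathlib

/- STATEMENT 3: for every α ∈ Λ²₁₄ one has α ∧ α ∧ φ₀ = −|α|²·vol₇, where |α|² is the sum of
the squares of the coefficients of α in the standard basis e*_i ∧ e*_j (i < j) of 2-forms.
In particular α ∧ α ∧ φ₀ is a negative multiple of vol₇ for every nonzero α ∈ Λ²₁₄.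

We identify `(ℝ⁷)*` with `ℝ⁷` via the standard basis, so forms are elements of the exterior
algebra of `V7 = Fin 7 → ℝ` (wedge = multiplication).  A general 2-form is written (uniquely)
as `∑_{i<j} a i j • (ε i * ε j)`, and we quantify over its coefficient functions `a`. -/

noncomputable section
open ExteriorAlgebra

abbrev V7 : Type := Fin 7 → ℝ
abbrev E7 : Type := ExteriorAlgebra ℝ V7

def ε (i : Fin 7) : E7 := ExteriorAlgebra.ι ℝ (Pi.single i 1)

/-- Contraction (interior product) `ι_v` with the vector `v`, in the first slot. -/
def ctr (v : V7) : E7 →ₗ[ℝ] E7 :=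
  CliffordAlgebra.contractLeft ((Pi.basisFun ℝ (Fin 7)).toDual v)

def ω : E7 := ε 1 * ε 2 + ε 3 * ε 4 + ε 5 * ε 6
def ρ : E7 := -(ε 2 * ε 4 * ε 6) + ε 2 * ε 3 * ε 5 + ε 1 * ε 4 * ε 5 + ε 1 * ε 3 * ε 6
def φ₀ : E7 := ω * ε 0 + ρ
def vol7 : E7 := ε 0 * ε 1 * ε 2 * ε 3 * ε 4 * ε 5 * ε 6

/-- `Λ²₁₄ = {α a 2-form : α ∧ ι_vφ₀ ∧ φ₀ = 0 for all v}`. -/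
def Λ14 : Submodule ℝ E7 where
  carrier := {α | α ∈ ⋀[ℝ]^2 V7 ∧ ∀ v : V7, α * ctr v φ₀ * φ₀ = 0}
  add_mem' := by
    rintro a b ⟨ha2, ha⟩ ⟨hb2, hb⟩
    exact ⟨add_mem ha2 hb2, fun v => by rw [add_mul, add_mul, ha v, hb v, add_zero]⟩
  zero_mem' := ⟨zero_mem _, fun v => by rw [zero_mul, zero_mul]⟩
  smul_mem' := by
    rintro c a ⟨ha2, ha⟩
    exact ⟨Submodule.smul_mem _ c ha2,
      fun v => by rw [smul_mul_assoc, smul_mul_assoc, ha v, smul_zero]⟩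

/-! For a 2-form `α` let `λ_k(α) = ⟨α, ι_{e_k} φ₀⟩`. Expanding in the standard basis gives
`α ∧ ι_{e_k} φ₀ ∧ φ₀ = 2 λ_k(α) vol₇` and `α ∧ α ∧ φ₀ = (∑_k λ_k(α)² - |α|²) vol₇`.
On `Λ²₁₄` the first identity forces every `λ_k(α)` to vanish, and the second then reads
`α ∧ α ∧ φ₀ = -|α|² vol₇`. -/

lemma ε_mul_self (i : Fin 7) : ε i * ε i = 0 := ι_sq_zero _

lemma ε_mul_self_mul (i : Fin 7) (x : E7) : ε i * (ε i * x) = 0 := by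
  rw [← mul_assoc, ε_mul_self, zero_mul]

-- The (logically idle) hypothesis `j < i` orients the rewrite, so that `simp` sorts products of
-- the `ε i` instead of looping.
lemma ε_mul_ε_of_lt {i j : Fin 7} (_ : j < i) : ε i * ε j = -(ε j * ε i) :=
  eq_neg_of_add_eq_zero_left (ι_add_mul_swap _ _)

lemma ε_mul_ε_mul_of_lt {i j : Fin 7} (h : j < i) (x : E7) :
    ε i * (ε j * x) = -(ε j * (ε i * x)) := by
  rw [← mul_assoc, ε_mul_ε_of_lt h, neg_mul, mul_assoc]

lemma Pi.basisFun_toDual_single {R ι : Type*} [CommRing R] [Fintype ι] [DecidableEq ι]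
    (v : ι → R) (i : ι) : (Pi.basisFun R ι).toDual v (Pi.single i 1) = v i := by
  rw [← Pi.basisFun_apply, Module.Basis.toDual_apply_left, Pi.basisFun_repr]

lemma ctr_ε (v : V7) (i : Fin 7) : ctr v (ε i) = algebraMap ℝ E7 (v i) := by
  rw [ctr, ε, CliffordAlgebra.contractLeft_ι, Pi.basisFun_toDual_single]

lemma ctr_ε_mul (v : V7) (i : Fin 7) (x : E7) :
    ctr v (ε i * x) = v i • x - ε i * ctr v x := by
  rw [ctr, ε, CliffordAlgebra.contractLeft_ι_mul, Pi.basisFun_toDual_single]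

lemma vol7_ne_zero : vol7 ≠ 0 := by
  -- contracting with `e₀, …, e₆` in turn takes `vol7` to `1`
  intro h
  have := congrArg (fun x => ctr (Pi.single 6 1) (ctr (Pi.single 5 1) (ctr (Pi.single 4 1)
    (ctr (Pi.single 3 1) (ctr (Pi.single 2 1) (ctr (Pi.single 1 1) (ctr (Pi.single 0 1) x))))))) h
  simp (config := { decide := true }) only [vol7, mul_assoc, ctr_ε_mul, ctr_ε, Pi.single_apply,
    if_true, if_false, one_smul, zero_smul, map_zero, map_one, mul_zero, sub_zero] at this
  exact one_ne_zero this

def twoForm (a : Fin 7 → Fin 7 → ℝ) : E7 := ∑ i, ∑ j, if i < j then a i j • (ε i * ε j) else 0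

def twoFormNormSq (a : Fin 7 → Fin 7 → ℝ) : ℝ := ∑ i, ∑ j, if i < j then a i j ^ 2 else 0

-- `ctrφ₀Pairing a k` is the inner product of `twoForm a` with `ι_{e_k} φ₀`: its `k`-th entry
-- reads off the coefficients of `ctr (Pi.single k 1) φ₀` in the basis `ε i * ε j`, `i < j`.
def ctrφ₀Pairing (a : Fin 7 → Fin 7 → ℝ) : Fin 7 → ℝ :=
  ![a 1 2 + a 3 4 + a 5 6, -a 0 2 + a 4 5 + a 3 6, a 0 1 - a 4 6 + a 3 5, -a 0 4 - a 2 5 - a 1 6,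
    a 0 3 + a 2 6 - a 1 5, -a 0 6 + a 2 3 + a 1 4, a 0 5 - a 2 4 + a 1 3]

set_option maxHeartbeats 1000000 in
lemma twoForm_mul_ctr_φ₀_mul_φ₀ (a : Fin 7 → Fin 7 → ℝ) (k : Fin 7) :
    twoForm a * ctr (Pi.single k 1) φ₀ * φ₀ = (2 * ctrφ₀Pairing a k) • vol7 := by
  fin_cases k <;>
  simp (config := { decide := true }) only [twoForm, ctrφ₀Pairing, φ₀, ω, ρ, vol7,
    Fin.sum_univ_seven, Fin.zero_eta, Fin.mk_one, Fin.reduceFinMk, Matrix.cons_val_zero,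
    Matrix.cons_val_one, Matrix.cons_val, reduceIte, ctr_ε_mul, ctr_ε, Pi.single_apply, map_add,
    map_neg, map_zero, map_one, one_smul, zero_smul, sub_zero, zero_sub, mul_one, mul_zero,
    add_zero, zero_add, mul_add, add_mul, mul_neg, neg_mul, neg_neg, neg_zero, smul_mul_assoc,
    smul_neg, smul_zero, mul_assoc, ε_mul_ε_of_lt, ε_mul_ε_mul_of_lt, ε_mul_self,
    ε_mul_self_mul] <;>
  match_scalars <;> ring

set_option maxHeartbeats 1000000 in
lemma twoForm_mul_twoForm_mul_φ₀ (a : Fin 7 → Fin 7 → ℝ) :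
    twoForm a * twoForm a * φ₀ = (∑ k, ctrφ₀Pairing a k ^ 2 - twoFormNormSq a) • vol7 := by
  simp (config := { decide := true }) only [twoForm, twoFormNormSq, ctrφ₀Pairing, φ₀, ω, ρ, vol7,
    Fin.sum_univ_seven, Matrix.cons_val_zero, Matrix.cons_val_one, Matrix.cons_val, reduceIte,
    mul_zero, add_zero, zero_add, mul_add, add_mul, mul_neg, neg_mul, neg_neg, neg_zero,
    smul_mul_assoc, mul_smul_comm, smul_smul, smul_add, smul_neg, smul_zero, mul_assoc,
    ε_mul_ε_of_lt, ε_mul_ε_mul_of_lt, ε_mul_self, ε_mul_self_mul]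
  match_scalars
  ring

lemma ctrφ₀Pairing_eq_zero_of_mem_Λ14 {a : Fin 7 → Fin 7 → ℝ} (h : twoForm a ∈ Λ14)
    (k : Fin 7) : ctrφ₀Pairing a k = 0 := by
  have hk := h.2 (Pi.single k 1)
  rw [twoForm_mul_ctr_φ₀_mul_φ₀, smul_eq_zero] at hk
  simpa using hk.resolve_right vol7_ne_zero

lemma twoForm_mul_twoForm_mul_φ₀_of_mem_Λ14 {a : Fin 7 → Fin 7 → ℝ} (h : twoForm a ∈ Λ14) :
    twoForm a * twoForm a * φ₀ = (-twoFormNormSq a) • vol7 := by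
  simp [twoForm_mul_twoForm_mul_φ₀, ctrφ₀Pairing_eq_zero_of_mem_Λ14 h]

lemma twoFormNormSq_pos {a : Fin 7 → Fin 7 → ℝ} (h : twoForm a ≠ 0) : 0 < twoFormNormSq a := by
  have hnn : ∀ i j, 0 ≤ (if i < j then a i j ^ 2 else 0 : ℝ) := fun i j => by
    split_ifs <;> positivity
  refine (Fintype.sum_nonneg fun i => Fintype.sum_nonneg (hnn i)).lt_of_ne' fun h0 => h ?_
  rw [Fintype.sum_eq_zero_iff_of_nonneg fun i => Fintype.sum_nonneg (hnn i)] at h0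
  refine Finset.sum_eq_zero fun i _ => Finset.sum_eq_zero fun j _ => ?_
  have hij := congrFun ((Fintype.sum_eq_zero_iff_of_nonneg (hnn i)).mp (congrFun h0 i)) j
  split_ifs at hij ⊢
  · rw [pow_eq_zero_iff two_ne_zero |>.mp hij, zero_smul]
  · rfl

def wedgePair (p : Fin 7 × Fin 7) : E7 := if p.1 < p.2 then ε p.1 * ε p.2 else 0

lemma ε_mul_ε_mem_span_wedgePair (i j : Fin 7) :
    ε i * ε j ∈ Submodule.span ℝ (Set.range wedgePair) := by
  rcases lt_trichotomy i j with hij | rfl | hij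
  · exact Submodule.subset_span ⟨(i, j), if_pos hij⟩
  · rw [ε_mul_self]
    exact zero_mem _
  · rw [ε_mul_ε_of_lt hij]
    exact neg_mem (Submodule.subset_span ⟨(j, i), if_pos hij⟩)

lemma ι_eq_sum_ε (x : V7) : ι ℝ x = ∑ i, x i • ε i := by
  conv_lhs => rw [← (Pi.basisFun ℝ (Fin 7)).sum_repr x]
  simp only [Pi.basisFun_repr, Pi.basisFun_apply, map_sum, map_smul, ε]

lemma exteriorPower_two_le_span_wedgePair :
    ⋀[ℝ]^2 V7 ≤ Submodule.span ℝ (Set.range wedgePair) := by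
  rw [← ιMulti_span_fixedDegree, Submodule.span_le]
  rintro _ ⟨v, rfl⟩
  rw [ιMulti_apply]
  simp only [List.ofFn_succ, Fin.succ_zero_eq_one, List.ofFn_zero, List.prod_cons,
    List.prod_nil, mul_one, SetLike.mem_coe, ι_eq_sum_ε, Finset.sum_mul_sum]
  refine Submodule.sum_mem _ fun i _ => Submodule.sum_mem _ fun j _ => ?_
  rw [smul_mul_smul_comm]
  exact Submodule.smul_mem _ _ (ε_mul_ε_mem_span_wedgePair i j)

lemma exists_twoForm_eq {α : E7} (h : α ∈ ⋀[ℝ]^2 V7) : ∃ a, twoForm a = α := by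
  obtain ⟨c, hc⟩ :=
    (Submodule.mem_span_range_iff_exists_fun ℝ).mp (exteriorPower_two_le_span_wedgePair h)
  refine ⟨fun i j => c (i, j), ?_⟩
  rw [← hc, Fintype.sum_prod_type]
  simp only [twoForm, wedgePair, smul_ite, smul_zero]

theorem stmt3 :
    (∀ a : Fin 7 → Fin 7 → ℝ,
      (∑ i, ∑ j, if i < j then a i j • (ε i * ε j) else 0) ∈ Λ14 →
      (∑ i, ∑ j, if i < j then a i j • (ε i * ε j) else 0) *
          (∑ i, ∑ j, if i < j then a i j • (ε i * ε j) else 0) * φ₀ =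
        (-(∑ i, ∑ j, if i < j then (a i j) ^ 2 else 0)) • vol7) ∧
    (∀ α ∈ Λ14, α ≠ 0 → ∃ c : ℝ, c < 0 ∧ α * α * φ₀ = c • vol7) := by
  refine ⟨fun a h => twoForm_mul_twoForm_mul_φ₀_of_mem_Λ14 h, ?_⟩
  rintro α hα hne
  obtain ⟨a, rfl⟩ := exists_twoForm_eq hα.1
  exact ⟨-twoFormNormSq a, neg_neg_of_pos (twoFormNormSq_pos hne),
    twoForm_mul_twoForm_mul_φ₀_of_mem_Λ14 hα⟩
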